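/- arXiv:2104.04558 — 6 statements merged into one kernel-verified Lean document; each statement's English description precedes it below -/
import Mathlib

section
/- For every integer d ≥ 2 and every M > 0, there exists a finite-index subgroup Λ of ℤ^d whose index N = [ℤ^d : Λ] satisfies N > M, together with a subset P of the discrete torus ℤ^d/Λ such that: P is connected under the rook adjacency induced on ℤ^d/Λ, |P| = (d/(2d−1))·N, and every element of the complement (ℤ^d/Λ) ∖ P has all of its 2d rook-neighbors in P. In particular |complement| = ((d−1)/(2d−1))·N and the complement consists of ((d−1)/(2d−1))·N singleton connected components (holes). -/
/-- A set `S` is connected under an adjacency relation: it is nonempty and any two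
of its elements are joined by a path staying inside `S`. -/
def ConnectedIn {α : Type*} (adj : α → α → Prop) (S : Set α) : Prop :=
  S.Nonempty ∧ ∀ x ∈ S, ∀ y ∈ S,
    Relation.ReflTransGen (fun a b => adj a b ∧ a ∈ S ∧ b ∈ S) x y

/-- Rook adjacency induced on the discrete torus `ℤ^d/Λ`: two classes are adjacent
iff they admit representatives at `ℓ¹`-distance 1. -/
def torusAdj (d : ℕ) (Λ : AddSubgroup (Fin d → ℤ)) (a b : (Fin d → ℤ) ⧸ Λ) : Prop :=
  ∃ x y : Fin d → ℤ, (QuotientAddGroup.mk x : (Fin d → ℤ) ⧸ Λ) = a ∧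
    (QuotientAddGroup.mk y : (Fin d → ℤ) ⧸ Λ) = b ∧ (∑ i, |x i - y i|) = 1

/-!
Take `Λ` to be the kernel of `x ↦ (∑ i • xᵢ mod 2d − 1, ∑ xᵢ mod 2m)`, so that the torus is
`ZMod (2d − 1) × ZMod (2m)` and a unit step `eᵢ` is translation by `(i, 1)`. The holes are the
cells `(u, t)` with `u ≠ 0` and `t` even. Every step changes the parity of `t`, so no two holes are
adjacent, and there are `2(d − 1)m` of them among `(2d − 1) · 2m` cells. The remaining cells are
connected: the axis `u = 0` is a cycle avoiding the holes, and since every `u` is `±i` for some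
`i < d`, every cell is one step `eᵢ` away from it.
-/

open Function

section ConnectedIn

variable {α β : Type*} {adj : α → α → Prop}

theorem connectedIn_of_reflTransGen {S : Set α} {x₀ : α} (hsymm : ∀ a b, adj a b → adj b a)
    (hx₀ : x₀ ∈ S)
    (hreach : ∀ y ∈ S, Relation.ReflTransGen (fun a b => adj a b ∧ a ∈ S ∧ b ∈ S) x₀ y) :
    ConnectedIn adj S := by
  refine ⟨⟨x₀, hx₀⟩, fun x hx y hy => .trans ?_ (hreach y hy)⟩
  refine Relation.ReflTransGen.mono ?_ _ _ (Relation.ReflTransGen.swap _ _ (hreach x hx))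
  rintro a b ⟨h, hb, ha⟩
  exact ⟨hsymm b a h, ha, hb⟩

theorem ConnectedIn.preimage_equiv {adj' : β → β → Prop} {S : Set β} (hS : ConnectedIn adj' S)
    (e : α ≃ β) (he : ∀ a b, adj' (e a) (e b) → adj a b) : ConnectedIn adj (e ⁻¹' S) := by
  obtain ⟨⟨y, hy⟩, hpath⟩ := hS
  refine ⟨⟨e.symm y, by simpa using hy⟩, fun a ha b hb => ?_⟩
  have := (hpath _ ha _ hb).lift (p := fun a b => adj a b ∧ a ∈ e ⁻¹' S ∧ b ∈ e ⁻¹' S) e.symm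
    fun x y ⟨h, hx, hy⟩ => ⟨he _ _ (by simpa using h), by simpa using hx, by simpa using hy⟩
  simpa only [onFun, Equiv.symm_apply_apply] using this

theorem card_quot_compl_eq_ncard {P : Set α} (hP : ∀ y ∉ P, ∀ z, adj y z → z ∈ P) :
    Nat.card (Quot fun a b : ↥Pᶜ => adj a.1 b.1) = Pᶜ.ncard := by
  rw [← Nat.card_coe_set_eq]
  exact Nat.card_congr
    ⟨Quot.lift id fun a b hab => absurd (hP a a.2 b hab) b.2, Quot.mk _,
      fun q => by induction q using Quot.ind; rfl, fun _ => rfl⟩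

end ConnectedIn

def CayleyAdj {G ι : Type*} [Add G] (s : ι → G) (g h : G) : Prop :=
  ∃ i, g = h + s i ∨ h = g + s i

theorem CayleyAdj.symm {G ι : Type*} [Add G] {s : ι → G} {g h : G} (hgh : CayleyAdj s g h) :
    CayleyAdj s h g :=
  let ⟨i, hi⟩ := hgh; ⟨i, hi.symm⟩

section Torus

variable {d : ℕ}

theorem sum_abs_eq_one_iff {z : Fin d → ℤ} :
    ∑ i, |z i| = 1 ↔ ∃ i, z = Pi.single i 1 ∨ -z = Pi.single i 1 := by
  constructor
  · intro h
    obtain ⟨i, hi⟩ : ∃ i, z i ≠ 0 := by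
      by_contra! hz
      simp [hz] at h
    have hsplit := Finset.add_sum_erase Finset.univ (fun j => |z j|) (Finset.mem_univ i)
    have hrest_nonneg : 0 ≤ ∑ j ∈ Finset.univ.erase i, |z j| :=
      Finset.sum_nonneg fun j _ => abs_nonneg (z j)
    have hzi : |z i| = 1 := by linarith [Int.one_le_abs hi]
    have hrest : ∀ j ≠ i, z j = 0 := fun j hj => abs_eq_zero.1 <|
      (Finset.sum_eq_zero_iff_of_nonneg fun k _ => abs_nonneg (z k)).1 (by linarith) j
        (Finset.mem_erase.2 ⟨hj, Finset.mem_univ j⟩)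
    have hz : z = Pi.single i (z i) := by
      ext j
      rcases eq_or_ne j i with rfl | hj
      · simp
      · simp [hj, hrest j hj]
    rcases (abs_eq zero_le_one).1 hzi with h1 | h1
    · exact ⟨i, Or.inl (by rw [hz, h1])⟩
    · exact ⟨i, Or.inr (by rw [hz, h1, Pi.single_neg, neg_neg])⟩
  · rintro ⟨i, rfl | hz⟩
    · rw [Finset.sum_eq_single i] <;> simp_all
    · rw [← neg_neg z, hz, Finset.sum_eq_single i] <;> simp_all

theorem torusAdj_iff (Λ : AddSubgroup (Fin d → ℤ)) (a b : (Fin d → ℤ) ⧸ Λ) :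
    torusAdj d Λ a b ↔ ∃ i, a = b + ↑(Pi.single i 1 : Fin d → ℤ) ∨
      b = a + ↑(Pi.single i 1 : Fin d → ℤ) := by
  constructor
  · rintro ⟨x, y, rfl, rfl, h⟩
    obtain ⟨i, hi | hi⟩ := (sum_abs_eq_one_iff (z := x - y)).1 h
    · exact ⟨i, Or.inl (by rw [← QuotientAddGroup.mk_add, ← hi, add_sub_cancel])⟩
    · exact ⟨i, Or.inr (by rw [← QuotientAddGroup.mk_add, ← hi, neg_sub, add_sub_cancel])⟩
  · rintro ⟨i, rfl | rfl⟩
    · obtain ⟨y, rfl⟩ := QuotientAddGroup.mk_surjective b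
      exact ⟨y + Pi.single i 1, y, rfl, rfl,
        (sum_abs_eq_one_iff (z := y + _ - y)).2 ⟨i, Or.inl (add_sub_cancel_left _ _)⟩⟩
    · obtain ⟨x, rfl⟩ := QuotientAddGroup.mk_surjective a
      exact ⟨x, x + Pi.single i 1, rfl, rfl,
        (sum_abs_eq_one_iff (z := x - (x + _))).2
          ⟨i, Or.inr (by rw [sub_add_cancel_left, neg_neg])⟩⟩

variable {G : Type*} [AddCommGroup G] (s : Fin d → G)

abbrev stepHom : (Fin d → ℤ) →+ G := (Fintype.linearCombination ℤ s).toAddMonoidHom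

theorem stepHom_single (i : Fin d) : stepHom s (Pi.single i 1) = s i := by simp

variable {s}

noncomputable def stepLatticeEquiv (hs : Surjective (stepHom s)) :
    (Fin d → ℤ) ⧸ (stepHom s).ker ≃+ G :=
  QuotientAddGroup.quotientKerEquivOfSurjective _ hs

theorem stepLatticeEquiv_mk (hs : Surjective (stepHom s)) (x : Fin d → ℤ) :
    stepLatticeEquiv hs x = stepHom s x :=
  rfl

theorem torusAdj_ker_stepHom_iff (hs : Surjective (stepHom s))
    (a b : (Fin d → ℤ) ⧸ (stepHom s).ker) :
    torusAdj d (stepHom s).ker a b ↔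
      CayleyAdj s (stepLatticeEquiv hs a) (stepLatticeEquiv hs b) := by
  simp only [torusAdj_iff, CayleyAdj, ← (stepLatticeEquiv hs).injective.eq_iff, map_add,
    stepLatticeEquiv_mk, stepHom_single]

end Torus

section IdealPolyomino

variable {d : ℕ}

def idealStep (d n : ℕ) (i : Fin d) : ZMod (2 * d - 1) × ZMod n := ((i : ℕ), 1)

theorem surjective_stepHom_idealStep (hd : 2 ≤ d) (n : ℕ) :
    Surjective (stepHom (idealStep d n)) := by
  rintro ⟨u, t⟩
  obtain ⟨a, rfl⟩ := ZMod.intCast_surjective u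
  obtain ⟨b, rfl⟩ := ZMod.intCast_surjective t
  refine ⟨Pi.single ⟨1, by omega⟩ a + Pi.single ⟨0, by omega⟩ (b - a), ?_⟩
  simp [idealStep]

def parityHom (m : ℕ) : ZMod (2 * m) →+* ZMod 2 := ZMod.castHom (dvd_mul_right 2 m) (ZMod 2)

def holes (d m : ℕ) : Set (ZMod (2 * d - 1) × ZMod (2 * m)) := {g | g.1 ≠ 0 ∧ parityHom m g.2 = 0}

theorem CayleyAdj.notMem_holes {m : ℕ} {g h : ZMod (2 * d - 1) × ZMod (2 * m)}
    (hg : g ∈ holes d m) (hgh : CayleyAdj (idealStep d (2 * m)) g h) : h ∉ holes d m := by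
  have key : ∀ x : ZMod 2, x + 1 = 0 → x ≠ 0 := by decide
  obtain ⟨-, hg⟩ := hg
  rintro ⟨-, hh⟩
  obtain ⟨i, rfl | rfl⟩ := hgh
  · simp only [idealStep, Prod.snd_add, map_add, map_one] at hg
    exact key _ hg hh
  · simp only [idealStep, Prod.snd_add, map_add, map_one, hg, zero_add] at hh
    exact one_ne_zero hh

theorem exists_fin_eq_or_eq_neg (hd : 1 ≤ d) (u : ZMod (2 * d - 1)) :
    ∃ i : Fin d, u = (i : ℕ) ∨ u = -((i : ℕ) : ZMod (2 * d - 1)) := by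
  have : NeZero (2 * d - 1) := ⟨by omega⟩
  have hu := ZMod.val_lt u
  by_cases h : u.val < d
  · exact ⟨⟨u.val, h⟩, Or.inl (ZMod.natCast_zmod_val u).symm⟩
  · refine ⟨⟨2 * d - 1 - u.val, by omega⟩, Or.inr ?_⟩
    simp [Nat.cast_sub hu.le]

theorem connectedIn_compl_holes (hd : 1 ≤ d) (m : ℕ) [NeZero m] :
    ConnectedIn (CayleyAdj (idealStep d (2 * m))) (holes d m)ᶜ := by
  have axis_mem : ∀ t, ((0 : ZMod (2 * d - 1)), t) ∈ (holes d m)ᶜ := by simp [holes]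
  set R := fun a b => CayleyAdj (idealStep d (2 * m)) a b ∧ a ∈ (holes d m)ᶜ ∧ b ∈ (holes d m)ᶜ
  have axis_reach : ∀ k : ℕ, Relation.ReflTransGen R 0 (0, (k : ZMod (2 * m))) := by
    intro k
    induction k with
    | zero => rw [Nat.cast_zero, Prod.mk_zero_zero]
    | succ k ih =>
      refine ih.tail ⟨⟨⟨0, hd⟩, Or.inr ?_⟩, axis_mem _, axis_mem _⟩
      simp [idealStep]
  refine connectedIn_of_reflTransGen (fun _ _ => CayleyAdj.symm) (axis_mem 0) fun g hg => ?_
  obtain ⟨i, hi | hi⟩ := exists_fin_eq_or_eq_neg hd g.1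
  · refine (axis_reach (g.2 - 1).val).tail ⟨⟨i, Or.inr ?_⟩, axis_mem _, hg⟩
    simp [idealStep, Prod.ext_iff, hi]
  · refine (axis_reach (g.2 + 1).val).tail ⟨⟨i, Or.inl ?_⟩, axis_mem _, hg⟩
    simp [idealStep, Prod.ext_iff, hi]

theorem ncard_holes (hd : 1 ≤ d) (m : ℕ) [NeZero m] : (holes d m).ncard = 2 * (d - 1) * m := by
  have : NeZero (2 * d - 1) := ⟨by omega⟩
  have hprod : holes d m = {0}ᶜ ×ˢ {t | parityHom m t = 0} := rfl
  have heven : {t | parityHom m t = 0}.ncard = m := by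
    set χ := (parityHom m).toAddMonoidHom
    have h1 := χ.ker.card_mul_index
    rw [AddSubgroup.index_ker, AddMonoidHom.range_eq_top_of_surjective χ
      (ZMod.castHom_surjective (dvd_mul_right 2 m)), AddSubgroup.card_top, Nat.card_zmod,
      Nat.card_zmod] at h1
    rw [← Nat.card_coe_set_eq]
    change Nat.card χ.ker = m
    omega
  rw [hprod, Set.ncard_prod, heven, Set.ncard_compl, Set.ncard_singleton, Nat.card_zmod]
  congr 1
  omega

theorem ncard_compl_holes (hd : 1 ≤ d) (m : ℕ) [NeZero m] : (holes d m)ᶜ.ncard = 2 * d * m := by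
  have : NeZero (2 * d - 1) := ⟨by omega⟩
  rw [Set.ncard_compl, ncard_holes hd, Nat.card_prod, Nat.card_zmod, Nat.card_zmod]
  obtain ⟨c, rfl⟩ := Nat.exists_eq_add_of_le hd
  rw [show 2 * (1 + c) - 1 = 2 * c + 1 by omega, Nat.add_sub_cancel_left]
  exact Nat.sub_eq_of_eq_add (by ring)

end IdealPolyomino

/-- For every `d ≥ 2` and every `M`, there is a finite-index subgroup `Λ ≤ ℤ^d` of index
`N > M` and a toric polyomino `P ⊆ ℤ^d/Λ` with `(d/(2d−1))·N` tiles all of whose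
complement consists of `((d−1)/(2d−1))·N` singleton holes: every cell not in `P` has all
its rook-neighbors in `P`, so the complement has `((d−1)/(2d−1))·N` cells and
`((d−1)/(2d−1))·N` connected components. -/
theorem exists_ideal_toric_polyomino (d : ℕ) (hd : 2 ≤ d) (M : ℕ) :
    ∃ (Λ : AddSubgroup (Fin d → ℤ)) (N : ℕ),
      Λ.index = N ∧ M < N ∧
      ∃ P : Set ((Fin d → ℤ) ⧸ Λ),
        ConnectedIn (torusAdj d Λ) P ∧
        (2 * d - 1) * P.ncard = d * N ∧
        (∀ y, y ∉ P → ∀ z, torusAdj d Λ y z → z ∈ P) ∧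
        (2 * d - 1) * Set.ncard Pᶜ = (d - 1) * N ∧
        (2 * d - 1) * Nat.card (Quot fun a b : ↥(Pᶜ) => torusAdj d Λ a.1 b.1) = (d - 1) * N := by
  set m := M + 1
  have hs := surjective_stepHom_idealStep hd (2 * m)
  set e := stepLatticeEquiv hs
  have hadj := torusAdj_ker_stepHom_iff hs
  have hncard : ∀ S, (e ⁻¹' S).ncard = S.ncard := fun S =>
    Set.ncard_preimage_of_injective_subset_range e.injective (by simp)
  have hindex : (stepHom (idealStep d (2 * m))).ker.index = (2 * d - 1) * (2 * m) := by
    rw [AddSubgroup.index_ker, AddMonoidHom.range_eq_top_of_surjective _ hs, AddSubgroup.card_top,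
      Nat.card_prod, Nat.card_zmod, Nat.card_zmod]
  set P := e ⁻¹' (holes d m)ᶜ
  have hPc : Pᶜ = e ⁻¹' holes d m := by rw [← Set.preimage_compl, compl_compl]
  have hholes : ∀ y ∉ P, ∀ z, torusAdj d _ y z → z ∈ P := fun y hy z hyz =>
    CayleyAdj.notMem_holes (not_not.1 hy) ((hadj y z).1 hyz)
  refine ⟨_, _, hindex, (by omega : M < 2 * m).trans_le (Nat.le_mul_of_pos_left _ (by omega)), P,
    (connectedIn_compl_holes (by omega) m).preimage_equiv e.toEquiv fun a b => (hadj a b).2,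
    ?_, hholes, ?_, ?_⟩
  · rw [hncard, ncard_compl_holes (by omega)]; ring
  · rw [hPc, hncard, ncard_holes (by omega)]; ring
  · rw [card_quot_compl_eq_ncard hholes, hPc, hncard, ncard_holes (by omega)]; ring
end

section
/- Let d ≥ 2, let Λ be a finite-index subgroup of ℤ^d such that every nonzero v ∈ Λ has Σᵢ|vᵢ| ≥ 3 (so the induced rook-adjacency graph on ℤ^d/Λ is simple), and let P be a nonempty proper subset of ℤ^d/Λ, connected under rook adjacency, with n cells whose complement has h connected components. Then d·h ≤ (d−1)·n + 1, i.e. h ≤ ((d−1)/d)·n + 1/d. -/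
/-!
Let `S` be the image in `ℤ^d/Λ` of the `2d` unit vectors, so that two cells are adjacent iff
they differ by an element of `S`; as `Λ` contains no vector of `ℓ¹`-norm 1, `0 ∉ S`. Count the
ordered adjacent pairs `(a, b)` with `a ∈ P`: there are `|S|·n` of them. Since `P` is connected, at
least `2(n - 1)` of them have `b ∈ P` (the two orientations of a spanning tree). Reversed, the
others are the pairs leaving the holes, and every nonempty proper subset of a finite group
generated by `S` is left by at least `|S|` pairs. Hence `|S|·h + 2(n - 1) ≤ |S|·n`, and
`|S| ≤ 2d` turns this into `d·h ≤ (d - 1)·n + 1`.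
-/

open Pointwise

theorem ConnectedIn.connected_induce {V : Type*} {Γ : SimpleGraph V} {P : Set V}
    (hP : ConnectedIn Γ.Adj P) : (Γ.induce P).Connected := by
  have hreach : ∀ x y, Relation.ReflTransGen (fun a b => Γ.Adj a b ∧ a ∈ P ∧ b ∈ P) x y →
      ∀ (hx : x ∈ P) (hy : y ∈ P), (Γ.induce P).Reachable ⟨x, hx⟩ ⟨y, hy⟩ := by
    intro x y hxy
    induction hxy with
    | refl => exact fun _ _ => .rfl
    | tail _ hbc ih =>
      obtain ⟨hadj, hb, -⟩ := hbc
      exact fun hx _ => (ih hx hb).trans (SimpleGraph.Adj.reachable hadj)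
  have := hP.1.to_subtype
  exact (SimpleGraph.connected_iff _).2
    ⟨fun x y => hreach x y (hP.2 x x.2 y y.2) x.2 y.2, inferInstance⟩

namespace AddAction

variable {G : Type*} [AddCommGroup G] {C : Set G} {k : G}

theorem add_mem_iff_of_mem_stabilizer (hk : k ∈ stabilizer G C) (q : G) :
    q + k ∈ C ↔ q ∈ C := by
  rw [mem_stabilizer_iff] at hk
  conv_lhs => rw [← hk]
  rw [Set.mem_vadd_set_iff_neg_vadd_mem, vadd_eq_add, add_comm q k, neg_add_cancel_left]

theorem exists_add_notMem_of_notMem_stabilizer [Finite G] {s : G}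
    (hs : s ∉ stabilizer G C) : ∃ q ∈ C, q + s ∉ C := by
  by_contra! h
  refine hs (mem_stabilizer_iff.2 (Set.eq_of_subset_of_ncard_le ?_ (Set.ncard_vadd_set s C).ge))
  rintro _ ⟨q, hq, rfl⟩
  simpa [add_comm] using h q hq

end AddAction

section CayleyArcs

variable {G : Type*} [AddCommGroup G] (S : Set G)

def cayleyArcs (A B : Set G) : Set (G × G) := {e | e.1 ∈ A ∧ e.2 ∈ B ∧ e.2 - e.1 ∈ S}

theorem ncard_cayleyArcs_add_ncard_cayleyArcs_compl [Finite G] (A B : Set G) :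
    (cayleyArcs S A B).ncard + (cayleyArcs S A Bᶜ).ncard = A.ncard * S.ncard := by
  have hunion : cayleyArcs S A B ∪ cayleyArcs S A Bᶜ =
      (fun p : G × G => (p.1, p.1 + p.2)) '' A ×ˢ S := by
    ext ⟨a, b⟩
    constructor
    · rintro (⟨ha, -, hs⟩ | ⟨ha, -, hs⟩) <;> exact ⟨(a, b - a), ⟨ha, hs⟩, by simp⟩
    · rintro ⟨⟨a, s⟩, ⟨ha, hs⟩, he⟩
      simp only [Prod.mk.injEq] at he
      obtain ⟨rfl, rfl⟩ := he
      by_cases hb : a + s ∈ B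
      · exact .inl ⟨ha, hb, by simpa using hs⟩
      · exact .inr ⟨ha, hb, by simpa using hs⟩
  have hinj : Function.Injective fun p : G × G => (p.1, p.1 + p.2) := by
    rintro ⟨a, s⟩ ⟨a', s'⟩ h
    simp only [Prod.mk.injEq] at h
    obtain ⟨rfl, h⟩ := h
    simpa using h
  have hdisj : Disjoint (cayleyArcs S A B) (cayleyArcs S A Bᶜ) :=
    Set.disjoint_left.2 fun _ h h' => h'.2.1 h.2.1
  rw [← Set.ncard_union_eq hdisj, hunion, Set.ncard_image_of_injective _ hinj, Set.ncard_prod]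

theorem ncard_cayleyArcs_comm (hS : ∀ s ∈ S, -s ∈ S) (A B : Set G) :
    (cayleyArcs S A B).ncard = (cayleyArcs S B A).ncard := by
  have : cayleyArcs S B A = Prod.swap '' cayleyArcs S A B := by
    ext ⟨a, b⟩
    refine ⟨fun ⟨ha, hb, hs⟩ => ⟨(b, a), ⟨hb, ha, by simpa using hS _ hs⟩, rfl⟩, ?_⟩
    rintro ⟨⟨b', a'⟩, ⟨hb, ha, hs⟩, he⟩
    simp only [Prod.swap_prod_mk, Prod.mk.injEq] at he
    obtain ⟨rfl, rfl⟩ := he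
    exact ⟨ha, hb, by simpa using hS _ hs⟩
  rw [this, Set.ncard_image_of_injective _ Prod.swap_injective]

/- For `s ∈ S` outside the stabilizer `K` of `C`, the pairs leaving `C` in direction `s` are
permuted by `K`, so there are at least `|K|` of them; and `|K| > |S ∩ K|` because `0 ∈ K \ S`. -/
theorem ncard_le_ncard_cayleyArcs_compl [Finite G] (hS0 : (0 : G) ∉ S)
    (hgen : AddSubgroup.closure S = ⊤) {C : Set G} (hC : C.Nonempty) (hCu : C ≠ Set.univ) :
    S.ncard ≤ (cayleyArcs S C Cᶜ).ncard := by
  set K := AddAction.stabilizer G C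
  have hKcard : (S ∩ K).ncard + 1 ≤ (K : Set G).ncard := by
    rw [← Set.ncard_insert_of_notMem fun h => hS0 h.1]
    exact Set.ncard_le_ncard (Set.insert_subset K.zero_mem Set.inter_subset_right)
  have hSK : (S \ K).Nonempty := by
    by_contra! h
    obtain ⟨q, hq⟩ := hC
    refine hCu (Set.eq_univ_of_forall fun x => ?_)
    have hKtop : K = ⊤ :=
      top_le_iff.1 (hgen ▸ (AddSubgroup.closure_le K).2 (Set.sdiff_eq_empty.1 h))
    have hx : x - q ∈ K := hKtop ▸ AddSubgroup.mem_top _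
    simpa only [add_sub_cancel] using (AddAction.add_mem_iff_of_mem_stabilizer hx q).2 hq
  have hexit : ∀ s ∈ S \ K, ∃ q ∈ C, q + s ∉ C := fun s hs =>
    AddAction.exists_add_notMem_of_notMem_stabilizer hs.2
  choose! q hqC hqs using hexit
  have hprod : (S \ K).ncard * (K : Set G).ncard ≤ (cayleyArcs S C Cᶜ).ncard := by
    rw [← Set.ncard_prod]
    refine Set.ncard_le_ncard_of_injOn (fun p => (q p.1 + p.2, q p.1 + p.2 + p.1)) ?_ ?_
    · rintro ⟨s, k⟩ ⟨hs, hk⟩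
      refine ⟨(AddAction.add_mem_iff_of_mem_stabilizer hk _).2 (hqC s hs), ?_, by simpa using hs.1⟩
      rw [add_right_comm]
      exact mt (AddAction.add_mem_iff_of_mem_stabilizer hk _).1 (hqs s hs)
    · rintro ⟨s, k⟩ - ⟨s', k'⟩ - h
      simp only [Prod.mk.injEq] at h
      obtain ⟨h1, h2⟩ := h
      obtain rfl : s = s' := by simpa [h1] using h2
      simp_all
  have hsplit := Set.ncard_inter_add_ncard_sdiff_eq_ncard S K
  have hpos := hSK.ncard_pos
  nlinarith

theorem two_mul_ncard_sub_one_le_ncard_cayleyArcs [Finite G] (hS0 : (0 : G) ∉ S)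
    (hS : ∀ s ∈ S, -s ∈ S) {P : Set G} (hP : ConnectedIn (fun a b => b - a ∈ S) P) :
    2 * (P.ncard - 1) ≤ (cayleyArcs S P P).ncard := by
  classical
  let Γ : SimpleGraph G := SimpleGraph.fromRel fun a b => b - a ∈ S
  have hadj (a b : G) : Γ.Adj a b ↔ b - a ∈ S := by
    refine ⟨fun ⟨_, h⟩ => h.elim id fun h => by simpa using hS _ h, fun h => ⟨?_, .inl h⟩⟩
    rintro rfl
    exact hS0 (by simpa using h)
  have hconn : (Γ.induce P).Connected := by
    refine ConnectedIn.connected_induce ?_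
    rwa [show Γ.Adj = _ from funext₂ fun a b => propext (hadj a b)]
  have : Fintype G := Fintype.ofFinite G
  let darts : (Γ.induce P).Dart ≃ cayleyArcs S P P :=
    { toFun := fun e => ⟨(e.fst, e.snd), e.fst.2, e.snd.2, (hadj _ _).1 e.adj⟩
      invFun := fun e => ⟨(⟨e.1.1, e.2.1⟩, ⟨e.1.2, e.2.2.1⟩), (hadj _ _).2 e.2.2.2⟩
      left_inv := fun _ => rfl
      right_inv := fun _ => rfl }
  calc 2 * (P.ncard - 1) ≤ 2 * (Γ.induce P).edgeFinset.card := by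
        have := hconn.card_vert_le_card_edgeSet_add_one
        rw [Nat.card_coe_set_eq, Nat.card_eq_fintype_card, ← SimpleGraph.edgeFinset_card] at this
        omega
    _ = (cayleyArcs S P P).ncard := by
        rw [← SimpleGraph.dart_card_eq_twice_card_edges, ← Nat.card_coe_set_eq,
          ← Nat.card_eq_fintype_card, Nat.card_congr darts]

theorem ncard_mul_card_holes_le_ncard_cayleyArcs [Finite G] (hS0 : (0 : G) ∉ S)
    (hgen : AddSubgroup.closure S = ⊤) {P : Set G} (hP : P.Nonempty) :
    S.ncard * Nat.card (Quot fun a b : ↥Pᶜ => b.1 - a.1 ∈ S) ≤ (cayleyArcs S Pᶜ P).ncard := by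
  classical
  set r : ↥Pᶜ → ↥Pᶜ → Prop := fun a b => b.1 - a.1 ∈ S
  let hole (c : Quot r) : Set G := Subtype.val '' {x | Quot.mk r x = c}
  have hboundary (c : Quot r) : S.ncard ≤ (cayleyArcs S (hole c) (hole c)ᶜ).ncard := by
    refine ncard_le_ncard_cayleyArcs_compl S hS0 hgen ?_ ?_
    · obtain ⟨x, rfl⟩ := Quot.exists_rep c
      exact ⟨x, x, rfl, rfl⟩
    · obtain ⟨p, hp⟩ := hP
      refine fun h => ?_
      obtain ⟨x, -, hx⟩ := h.symm ▸ Set.mem_univ p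
      exact x.2 (hx ▸ hp)
  have hsub : ⋃ c, cayleyArcs S (hole c) (hole c)ᶜ ⊆ cayleyArcs S Pᶜ P := by
    simp only [Set.iUnion_subset_iff]
    rintro c ⟨a, b⟩ ⟨⟨a', ha', rfl⟩, hb, hs⟩
    refine ⟨a'.2, by_contra fun hbP => hb ⟨⟨b, hbP⟩, ?_, rfl⟩, hs⟩
    exact (Quot.sound hs).symm.trans ha'
  have hdisj : Pairwise (Function.onFun Disjoint fun c => cayleyArcs S (hole c) (hole c)ᶜ) := by
    refine fun c c' hcc' => Set.disjoint_left.2 ?_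
    rintro e ⟨⟨x, hx, hxe⟩, -⟩ ⟨⟨y, hy, hye⟩, -⟩
    exact hcc' (hx ▸ hy ▸ congrArg _ (Subtype.ext (hxe.trans hye.symm)))
  have : Fintype (Quot r) := Fintype.ofFinite _
  calc S.ncard * Nat.card (Quot r) = ∑ c : Quot r, S.ncard := by
        simp [Nat.card_eq_fintype_card, mul_comm]
    _ ≤ ∑ c : Quot r, (cayleyArcs S (hole c) (hole c)ᶜ).ncard :=
        Finset.sum_le_sum fun c _ => hboundary c
    _ = (⋃ c, cayleyArcs S (hole c) (hole c)ᶜ).ncard := by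
        rw [Set.ncard_iUnion_of_finite (fun _ => Set.toFinite _) hdisj,
          finsum_eq_sum_of_fintype]
    _ ≤ (cayleyArcs S Pᶜ P).ncard := Set.ncard_le_ncard hsub

theorem ncard_mul_card_holes_add_le [Finite G] (hS0 : (0 : G) ∉ S) (hS : ∀ s ∈ S, -s ∈ S)
    (hgen : AddSubgroup.closure S = ⊤) {P : Set G} (hP : ConnectedIn (fun a b => b - a ∈ S) P) :
    S.ncard * Nat.card (Quot fun a b : ↥Pᶜ => b.1 - a.1 ∈ S) + 2 * (P.ncard - 1) ≤
      S.ncard * P.ncard := by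
  have harcs := ncard_cayleyArcs_add_ncard_cayleyArcs_compl S P P
  have hcomm := ncard_cayleyArcs_comm S hS Pᶜ P
  have hholes := ncard_mul_card_holes_le_ncard_cayleyArcs S hS0 hgen hP.1
  have htree := two_mul_ncard_sub_one_le_ncard_cayleyArcs S hS0 hS hP
  linarith [mul_comm P.ncard S.ncard]

end CayleyArcs

section UnitSteps

variable {d : ℕ}

def unitSteps (d : ℕ) : Set (Fin d → ℤ) := {v | ∑ i, |v i| = 1}

theorem single_one_mem_unitSteps (i : Fin d) : Pi.single i 1 ∈ unitSteps d := by
  simp [unitSteps, Pi.single_apply, apply_ite]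

theorem unitSteps_subset_range :
    unitSteps d ⊆ Set.range fun p : Fin d × ℤˣ => Pi.single p.1 (p.2 : ℤ) := by
  intro v (hv : ∑ j, |v j| = 1)
  obtain ⟨i, hi⟩ : ∃ i, v i ≠ 0 := by
    by_contra! h
    simp [h] at hv
  have hsplit := Finset.add_sum_erase Finset.univ (fun j => |v j|) (Finset.mem_univ i)
  have hrest := Finset.sum_nonneg fun j (_ : j ∈ Finset.univ.erase i) => abs_nonneg (v j)
  have hvi : |v i| = 1 := by have := abs_pos.2 hi; omega
  have hzero : ∀ j ≠ i, v j = 0 := fun j hj => abs_eq_zero.1 <|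
    (Finset.sum_eq_zero_iff_of_nonneg fun j _ => abs_nonneg (v j)).1 (by omega) j
      (Finset.mem_erase.2 ⟨hj, Finset.mem_univ j⟩)
  refine ⟨(i, (Int.isUnit_iff_abs_eq.2 hvi).unit), funext fun j => ?_⟩
  by_cases hj : j = i
  · subst hj; simp
  · simp [hj, hzero j hj]

theorem closure_unitSteps : AddSubgroup.closure (unitSteps d) = ⊤ := by
  refine eq_top_iff.2 fun x _ => ?_
  rw [← Finset.univ_sum_single x]
  refine AddSubgroup.sum_mem _ fun i _ => ?_
  convert AddSubgroup.zsmul_mem _ (AddSubgroup.subset_closure (single_one_mem_unitSteps i)) (x i)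
  rw [← Pi.single_smul, smul_eq_mul, mul_one]

variable (Λ : AddSubgroup (Fin d → ℤ))

def torusSteps : Set ((Fin d → ℤ) ⧸ Λ) := QuotientAddGroup.mk '' unitSteps d

theorem torusAdj_iff_sub_mem_torusSteps (a b : (Fin d → ℤ) ⧸ Λ) :
    torusAdj d Λ a b ↔ b - a ∈ torusSteps Λ := by
  constructor
  · rintro ⟨x, y, rfl, rfl, hxy⟩
    exact ⟨y - x, by simpa [unitSteps, abs_sub_comm] using hxy, rfl⟩
  · rintro ⟨v, hv, hva⟩
    obtain ⟨x, rfl⟩ := QuotientAddGroup.mk_surjective a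
    refine ⟨x, x + v, rfl, by rw [QuotientAddGroup.mk_add, hva, add_sub_cancel], ?_⟩
    simpa [unitSteps] using hv

theorem zero_notMem_torusSteps (hΛ : ∀ v ∈ Λ, ∑ i, |v i| ≠ 1) : 0 ∉ torusSteps Λ := by
  rintro ⟨v, hv, h0⟩
  exact hΛ v ((QuotientAddGroup.eq_zero_iff v).1 h0) hv

theorem neg_mem_torusSteps {s : (Fin d → ℤ) ⧸ Λ} (hs : s ∈ torusSteps Λ) : -s ∈ torusSteps Λ := by
  obtain ⟨v, hv, rfl⟩ := hs
  exact ⟨-v, by simpa [unitSteps] using hv, rfl⟩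

theorem closure_torusSteps : AddSubgroup.closure (torusSteps Λ) = ⊤ := by
  rw [torusSteps, ← QuotientAddGroup.coe_mk', ← AddMonoidHom.map_closure, closure_unitSteps,
    AddSubgroup.map_top_of_surjective _ (QuotientAddGroup.mk'_surjective Λ)]

theorem ncard_torusSteps_le : (torusSteps Λ).ncard ≤ 2 * d := by
  let f (p : Fin d × ℤˣ) : (Fin d → ℤ) ⧸ Λ := QuotientAddGroup.mk (Pi.single p.1 (p.2 : ℤ))
  have hsub : torusSteps Λ ⊆ Set.range f := by
    rintro _ ⟨v, hv, rfl⟩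
    obtain ⟨p, rfl⟩ := unitSteps_subset_range hv
    exact ⟨p, rfl⟩
  calc (torusSteps Λ).ncard ≤ (Set.range f).ncard := Set.ncard_le_ncard hsub (Set.finite_range f)
    _ ≤ Nat.card (Fin d × ℤˣ) := by simpa using Set.ncard_image_le (f := f) (s := Set.univ)
    _ = 2 * d := by simp [mul_comm]

end UnitSteps

theorem toric_polyomino_holes_upper_bound_general (d : ℕ) (hd : 2 ≤ d)
    (Λ : AddSubgroup (Fin d → ℤ)) (hfin : Λ.index ≠ 0)
    (hshort : ∀ v ∈ Λ, v ≠ 0 → 3 ≤ ∑ i, |v i|)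
    (P : Set ((Fin d → ℤ) ⧸ Λ))
    (hconn : ConnectedIn (torusAdj d Λ) P)
    (n h : ℕ) (hn : P.ncard = n)
    (hh : Nat.card (Quot fun a b : ↥(Pᶜ) => torusAdj d Λ a.1 b.1) = h) :
    d * h ≤ (d - 1) * n + 1 := by
  have : Λ.FiniteIndex := ⟨hfin⟩
  have hadj : torusAdj d Λ = fun a b => b - a ∈ torusSteps Λ :=
    funext₂ fun a b => propext (torusAdj_iff_sub_mem_torusSteps Λ a b)
  rw [hadj] at hconn hh
  have hS0 : 0 ∉ torusSteps Λ := zero_notMem_torusSteps Λ fun v hv hv1 => by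
    have := hshort v hv (by rintro rfl; simp at hv1)
    omega
  have key := ncard_mul_card_holes_add_le _ hS0 (fun _ => neg_mem_torusSteps Λ)
    (closure_torusSteps Λ) hconn
  rw [hh, hn] at key
  have hSpos : 0 < (torusSteps Λ).ncard :=
    Set.Nonempty.ncard_pos (Set.toFinite _)
      ⟨_, Set.mem_image_of_mem _ (single_one_mem_unitSteps (⟨0, by omega⟩ : Fin d))⟩
  have hSle : ((torusSteps Λ).ncard : ℤ) ≤ 2 * d := mod_cast ncard_torusSteps_le Λ
  have hnpos : 0 < n := hn ▸ hconn.1.ncard_pos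
  zify [hnpos, show 1 ≤ d by omega] at key ⊢
  have hhn : (h : ℤ) ≤ n := by nlinarith
  nlinarith [mul_nonneg (sub_nonneg.2 hhn) (sub_nonneg.2 hSle)]

/-- A toric polyomino with `n` cells in `ℤ^d/Λ` whose complement has `h` connected
components (holes) satisfies `d·h ≤ (d−1)·n + 1`. The hypothesis that every nonzero
`v ∈ Λ` has `ℓ¹`-norm at least 3 ensures the induced rook-adjacency graph is simple.
The number of connected components of the complement is the cardinality of the quotient
of `Pᶜ` by the equivalence relation generated by rook adjacency. -/
theorem toric_polyomino_holes_upper_bound (d : ℕ) (hd : 2 ≤ d)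
    (Λ : AddSubgroup (Fin d → ℤ)) (hfin : Λ.index ≠ 0)
    (hshort : ∀ v ∈ Λ, v ≠ 0 → 3 ≤ ∑ i, |v i|)
    (P : Set ((Fin d → ℤ) ⧸ Λ)) (hne : P.Nonempty) (hprop : P ≠ Set.univ)
    (hconn : ConnectedIn (torusAdj d Λ) P)
    (n h : ℕ) (hn : P.ncard = n)
    (hh : Nat.card (Quot fun a b : ↥(Pᶜ) => torusAdj d Λ a.1 b.1) = h) :
    d * h ≤ (d - 1) * n + 1 :=
  toric_polyomino_holes_upper_bound_general d hd Λ hfin hshort P hconn n h hn hh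
end

section
/- Let d ≥ 1, q = 2d+1, and let L̃_d = {a ∈ ℤ^d : Σ_{i=1}^d i·aᵢ ≡ 0 (mod q)}. Then for every x ∈ ℤ^d there is exactly one y ∈ L̃_d with Σᵢ|xᵢ − yᵢ| ≤ 1. Equivalently, the translates by elements of L̃_d of the jack (the set of points of ℓ¹-norm at most 1) partition ℤ^d. -/
private lemma sum_single_abs {d : ℕ} (j : Fin d) (c : ℤ) :
    ∑ i : Fin d, |(Pi.single j c : Fin d → ℤ) i| = |c| := by
  rw [Finset.sum_eq_single j]
  · simp
  · intro i _ hi; simp [Pi.single_eq_of_ne hi]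
  · simp

private lemma sum_weight_single {d : ℕ} (j : Fin d) (c : ℤ) :
    ∑ i : Fin d, ((i.val : ℤ) + 1) * (Pi.single j c : Fin d → ℤ) i = ((j.val : ℤ) + 1) * c := by
  rw [Finset.sum_eq_single j]
  · simp
  · intro i _ hi; simp [Pi.single_eq_of_ne hi]
  · simp

private lemma key_zero {d : ℕ} (z : Fin d → ℤ)
    (hz : ∑ i, |z i| ≤ 2)
    (hdvd : (2 * (d : ℤ) + 1) ∣ ∑ i : Fin d, ((i.val : ℤ) + 1) * z i) :
    z = 0 := by
  set T := ∑ i : Fin d, ((i.val : ℤ) + 1) * z i with hTdef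
  have hTbound : |T| ≤ 2 * d := by
    calc |T| ≤ ∑ i : Fin d, |((i.val : ℤ) + 1) * z i| := Finset.abs_sum_le_sum_abs _ _
      _ ≤ ∑ i : Fin d, (d : ℤ) * |z i| := by
          apply Finset.sum_le_sum; intro i _
          rw [abs_mul, abs_of_nonneg (by positivity : (0:ℤ) ≤ (i.val : ℤ) + 1)]
          apply mul_le_mul_of_nonneg_right _ (abs_nonneg _)
          have := i.isLt; omega
      _ = (d : ℤ) * ∑ i, |z i| := by rw [Finset.mul_sum]
      _ ≤ (d : ℤ) * 2 := mul_le_mul_of_nonneg_left hz (by positivity)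
      _ = 2 * d := by ring
  have hT0 : T = 0 := by
    refine Int.eq_zero_of_abs_lt_dvd hdvd ?_
    omega
  by_contra hne
  obtain ⟨j, hj⟩ : ∃ j, z j ≠ 0 := by
    by_contra h; push_neg at h; exact hne (funext fun i => h i)
  have habsj : 1 ≤ |z j| := Int.one_le_abs hj
  have hsplit : ∑ i, |z i| = |z j| + ∑ i ∈ Finset.univ.erase j, |z i| :=
    (Finset.add_sum_erase _ _ (Finset.mem_univ j)).symm
  have hrest_nonneg : 0 ≤ ∑ i ∈ Finset.univ.erase j, |z i| :=
    Finset.sum_nonneg fun i _ => abs_nonneg _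
  have hTsplit : T = ((j.val : ℤ) + 1) * z j +
      ∑ i ∈ Finset.univ.erase j, ((i.val : ℤ) + 1) * z i :=
    (Finset.add_sum_erase _ _ (Finset.mem_univ j)).symm
  by_cases hk : ∃ k ∈ Finset.univ.erase j, z k ≠ 0
  · obtain ⟨k, hkmem, hk0⟩ := hk
    have hkj : k ≠ j := Finset.ne_of_mem_erase hkmem
    have habsk : 1 ≤ |z k| := Int.one_le_abs hk0
    have hsplit2 : ∑ i ∈ Finset.univ.erase j, |z i| =
        |z k| + ∑ i ∈ (Finset.univ.erase j).erase k, |z i| :=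
      (Finset.add_sum_erase _ _ hkmem).symm
    have hrest2_nonneg : 0 ≤ ∑ i ∈ (Finset.univ.erase j).erase k, |z i| :=
      Finset.sum_nonneg fun i _ => abs_nonneg _
    have hzerorest : ∀ i ∈ (Finset.univ.erase j).erase k, z i = 0 := by
      intro i hi
      by_contra h
      have h1 : 1 ≤ |z i| := Int.one_le_abs h
      have h2 : |z i| ≤ ∑ i ∈ (Finset.univ.erase j).erase k, |z i| :=
        Finset.single_le_sum (f := fun i => |z i|) (fun i _ => abs_nonneg _) hi
      omega
    have habsj1 : |z j| = 1 := by omega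
    have habsk1 : |z k| = 1 := by omega
    have hTrest : ∑ i ∈ (Finset.univ.erase j).erase k, ((i.val : ℤ) + 1) * z i = 0 :=
      Finset.sum_eq_zero fun i hi => by rw [hzerorest i hi, mul_zero]
    have hTval : T = ((j.val : ℤ) + 1) * z j + ((k.val : ℤ) + 1) * z k := by
      rw [hTsplit, (Finset.add_sum_erase _ _ hkmem).symm, hTrest, add_zero]
    have heq : ((j.val : ℤ) + 1) * z j = -(((k.val : ℤ) + 1) * z k) := by
      rw [hTval] at hT0; linarith
    have habseq : ((j.val : ℤ) + 1) * |z j| = ((k.val : ℤ) + 1) * |z k| := by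
      have h := congrArg abs heq
      rwa [abs_neg, abs_mul, abs_mul,
        abs_of_nonneg (by positivity : (0:ℤ) ≤ (j.val : ℤ) + 1),
        abs_of_nonneg (by positivity : (0:ℤ) ≤ (k.val : ℤ) + 1)] at h
    rw [habsj1, habsk1, mul_one, mul_one] at habseq
    have : j.val = k.val := by omega
    exact hkj (Fin.ext this.symm)
  · push_neg at hk
    have hrest0 : ∑ i ∈ Finset.univ.erase j, ((i.val : ℤ) + 1) * z i = 0 :=
      Finset.sum_eq_zero fun i hi => by rw [hk i hi, mul_zero]
    rw [hTsplit, hrest0, add_zero] at hT0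
    exact mul_ne_zero (by positivity : ((j.val : ℤ) + 1) ≠ 0) hj hT0

private lemma exists_correction (d : ℕ) (hd : 1 ≤ d) (S : ℤ) :
    ∃ (j : Fin d) (c : ℤ), |c| ≤ 1 ∧ (2 * (d : ℤ) + 1) ∣ S + ((j.val : ℤ) + 1) * c := by
  set q : ℤ := 2 * d + 1 with hq
  have hq0 : 0 < q := by positivity
  set r : ℤ := S % q with hr
  have hr0 : 0 ≤ r := Int.emod_nonneg S (by omega)
  have hrlt : r < q := Int.emod_lt_of_pos S hq0
  have hdvdSr : q ∣ S - r := Int.dvd_self_sub_of_emod_eq rfl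
  by_cases h0 : r = 0
  · refine ⟨⟨0, hd⟩, 0, by simp, ?_⟩
    rw [h0, sub_zero] at hdvdSr
    simpa using hdvdSr
  by_cases hle : r ≤ d
  · have hjlt : (r - 1).toNat < d := by omega
    refine ⟨⟨(r - 1).toNat, hjlt⟩, -1, by norm_num, ?_⟩
    have hcast : (((r - 1).toNat : ℤ)) = r - 1 := Int.toNat_of_nonneg (by omega)
    have heq : S + (((⟨(r - 1).toNat, hjlt⟩ : Fin d).val : ℤ) + 1) * (-1) = S - r := by
      simp only [hcast]
      ring
    rw [heq]
    exact hdvdSr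
  · have hjlt : (q - r - 1).toNat < d := by omega
    refine ⟨⟨(q - r - 1).toNat, hjlt⟩, 1, by norm_num, ?_⟩
    have hcast : (((q - r - 1).toNat : ℤ)) = q - r - 1 := Int.toNat_of_nonneg (by omega)
    have heq : S + (((⟨(q - r - 1).toNat, hjlt⟩ : Fin d).val : ℤ) + 1) * 1 = (S - r) + q := by
      simp only [hcast]
      ring
    rw [heq]
    exact dvd_add hdvdSr dvd_rfl

/-- For `q = 2d+1`, the lifted code `L̃_d = {a ∈ ℤ^d : Σ i·aᵢ ≡ 0 (mod q)}` is a perfect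
covering of `ℤ^d` by jacks: every `x ∈ ℤ^d` has exactly one `y ∈ L̃_d` with
`Σᵢ|xᵢ − yᵢ| ≤ 1`. -/
theorem lifted_lee_code_jack_tiling (d : ℕ) (hd : 1 ≤ d) (x : Fin d → ℤ) :
    ∃! y : Fin d → ℤ,
      ((2 * (d : ℤ) + 1) ∣ ∑ i : Fin d, ((i.val : ℤ) + 1) * y i) ∧
      (∑ i, |x i - y i|) ≤ 1 := by
  obtain ⟨j, c, hc, hdvd⟩ := exists_correction d hd (∑ i : Fin d, ((i.val : ℤ) + 1) * x i)
  refine ⟨fun i => x i + (Pi.single j c : Fin d → ℤ) i, ⟨?_, ?_⟩, ?_⟩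
  · have hsum : ∑ i : Fin d, ((i.val : ℤ) + 1) * (x i + (Pi.single j c : Fin d → ℤ) i) =
        (∑ i : Fin d, ((i.val : ℤ) + 1) * x i) + ((j.val : ℤ) + 1) * c := by
      rw [← sum_weight_single j c, ← Finset.sum_add_distrib]
      exact Finset.sum_congr rfl fun i _ => by ring
    rw [hsum]
    exact hdvd
  · have hsum : ∑ i : Fin d, |x i - (x i + (Pi.single j c : Fin d → ℤ) i)| =
        ∑ i : Fin d, |(Pi.single j c : Fin d → ℤ) i| := by
      refine Finset.sum_congr rfl fun i _ => ?_
      rw [show x i - (x i + (Pi.single j c : Fin d → ℤ) i) = -((Pi.single j c : Fin d → ℤ) i) by ring, abs_neg]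
    rw [hsum, sum_single_abs]
    exact hc
  · intro y₁ ⟨hdvd₁, hnear₁⟩
    set y₀ : Fin d → ℤ := fun i => x i + (Pi.single j c : Fin d → ℤ) i with hy₀
    have hdvd₀ : (2 * (d : ℤ) + 1) ∣ ∑ i : Fin d, ((i.val : ℤ) + 1) * y₀ i := by
      have hsum : ∑ i : Fin d, ((i.val : ℤ) + 1) * y₀ i =
          (∑ i : Fin d, ((i.val : ℤ) + 1) * x i) + ((j.val : ℤ) + 1) * c := by
        rw [hy₀, ← sum_weight_single j c, ← Finset.sum_add_distrib]
        exact Finset.sum_congr rfl fun i _ => by ring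
      rw [hsum]
      exact hdvd
    have hnear₀ : (∑ i, |x i - y₀ i|) ≤ 1 := by
      have hsum : ∑ i : Fin d, |x i - y₀ i| = ∑ i : Fin d, |(Pi.single j c : Fin d → ℤ) i| := by
        refine Finset.sum_congr rfl fun i _ => ?_
        rw [show x i - y₀ i = -((Pi.single j c : Fin d → ℤ) i) by rw [hy₀]; ring, abs_neg]
      rw [hsum, sum_single_abs]
      exact hc
    have hz : (fun i => y₁ i - y₀ i) = 0 := by
      apply key_zero
      · calc ∑ i, |y₁ i - y₀ i| ≤ ∑ i, (|x i - y₁ i| + |x i - y₀ i|) := by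
              refine Finset.sum_le_sum fun i _ => ?_
              have := abs_sub (x i - y₀ i) (x i - y₁ i)
              calc |y₁ i - y₀ i| = |(x i - y₀ i) - (x i - y₁ i)| := by ring_nf
                _ ≤ |x i - y₀ i| + |x i - y₁ i| := abs_sub _ _
                _ = |x i - y₁ i| + |x i - y₀ i| := by ring
          _ = (∑ i, |x i - y₁ i|) + (∑ i, |x i - y₀ i|) := Finset.sum_add_distrib
          _ ≤ 1 + 1 := add_le_add hnear₁ hnear₀
          _ = 2 := by norm_num
      · have : ∑ i : Fin d, ((i.val : ℤ) + 1) * (y₁ i - y₀ i) =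
            (∑ i : Fin d, ((i.val : ℤ) + 1) * y₁ i) -
            (∑ i : Fin d, ((i.val : ℤ) + 1) * y₀ i) := by
          rw [← Finset.sum_sub_distrib]
          exact Finset.sum_congr rfl fun i _ => by ring
        rw [this]
        exact dvd_sub hdvd₁ hdvd₀
    funext i
    have := congrFun hz i
    simp only [Pi.zero_apply] at this
    have : y₁ i = y₀ i := by omega
    rw [this, hy₀]
end

section
/- Let d ≥ 2 and q = 2d−1. Let L̃_{d−1} = {a ∈ ℤ^{d−1} : Σ_{i=1}^{d−1} i·aᵢ ≡ 0 (mod 2d−1)} and K_d = {x ∈ ℤ^d : Σᵢ xᵢ is even} ∪ {x ∈ ℤ^d : (x₁,…,x_{d−1}) ∈ L̃_{d−1}}. Then for every a ∈ ℤ^d, the box {a₁, a₁+1, …, a₁+q−1} × {a₂} × ⋯ × {a_{d−1}} × {a_d, a_d+1} (of size q in coordinate 1, size 1 in coordinates 2 through d−1, and size 2 in coordinate d) contains exactly q+1 = 2d elements of K_d. In particular K_d has density d/(2d−1) in ℤ^d. -/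
/-- The lifted perfect Lee code in `ℤ^(d-1)` with modulus `q = 2d-1`. -/
def memLtil (d : ℕ) (a : Fin (d - 1) → ℤ) : Prop :=
  (2 * (d : ℤ) - 1) ∣ ∑ i : Fin (d - 1), ((i.val : ℤ) + 1) * a i

/-- The pattern `K_d ⊆ ℤ^d`: all cells with even coordinate sum, together with all
cells whose first `d-1` coordinates lie in the lifted code `L̃_{d-1}`. -/
def memKd (d : ℕ) (x : Fin d → ℤ) : Prop :=
  Even (∑ i, x i) ∨ memLtil d (fun i => x (Fin.castLE (Nat.sub_le d 1) i))

/-- Every `q × 1 × ⋯ × 1 × 2` box in `ℤ^d` (with `q = 2d-1`: length `q` in the first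
coordinate, length 1 in coordinates `2,…,d-1`, length 2 in the last coordinate)
contains exactly `q + 1 = 2d` elements of `K_d`. -/
theorem Kd_box_count (d : ℕ) (hd : 2 ≤ d) (a : Fin d → ℤ) :
    Set.ncard {x : Fin d → ℤ |
      (a ⟨0, by omega⟩ ≤ x ⟨0, by omega⟩ ∧
        x ⟨0, by omega⟩ < a ⟨0, by omega⟩ + (2 * (d : ℤ) - 1)) ∧
      (∀ i : Fin d, i ≠ ⟨0, by omega⟩ → i ≠ ⟨d - 1, by omega⟩ → x i = a i) ∧
      (x ⟨d - 1, by omega⟩ = a ⟨d - 1, by omega⟩ ∨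
        x ⟨d - 1, by omega⟩ = a ⟨d - 1, by omega⟩ + 1) ∧
      memKd d x} = 2 * d := by
  classical
  have h0d : 0 < d := by omega
  have hdd : d - 1 < d := by omega
  have h0d1 : 0 < d - 1 := by omega
  have hdcast : (2 : ℤ) ≤ (d : ℤ) := by exact_mod_cast hd
  set q : ℤ := 2 * (d : ℤ) - 1 with hqdef
  have hq0 : 0 < q := by omega
  set i0 : Fin d := ⟨0, h0d⟩ with hi0
  set iq : Fin d := ⟨d - 1, hdd⟩ with hiq
  have hne : iq ≠ i0 := by simp [hi0, hiq, Fin.ext_iff]; omega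
  set z0 : Fin (d - 1) := ⟨0, h0d1⟩ with hz0
  set C : ℤ := ∑ i ∈ (Finset.univ.erase i0).erase iq, a i with hC
  set D : ℤ := ∑ i ∈ Finset.univ.erase z0,
      ((i.val : ℤ) + 1) * a (Fin.castLE (Nat.sub_le d 1) i) with hD
  -- sum lemmas
  have hsum1 : ∀ x : Fin d → ℤ, (∀ i, i ≠ i0 → i ≠ iq → x i = a i) →
      ∑ i, x i = x i0 + x iq + C := by
    intro x hx
    have h1 : ∑ i ∈ Finset.univ.erase i0, x i + x i0 = ∑ i, x i :=
      Finset.sum_erase_add _ _ (Finset.mem_univ i0)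
    have h2 : ∑ i ∈ (Finset.univ.erase i0).erase iq, x i + x iq
        = ∑ i ∈ Finset.univ.erase i0, x i :=
      Finset.sum_erase_add _ _ (Finset.mem_erase.2 ⟨hne, Finset.mem_univ iq⟩)
    have h3 : ∑ i ∈ (Finset.univ.erase i0).erase iq, x i = C := by
      rw [hC]
      refine Finset.sum_congr rfl fun i hi => ?_
      simp only [Finset.mem_erase, Finset.mem_univ, and_true] at hi
      exact hx i hi.2 hi.1
    omega
  have hcast0 : Fin.castLE (Nat.sub_le d 1) z0 = i0 := by
    simp [hz0, hi0, Fin.ext_iff]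
  have hsum2 : ∀ x : Fin d → ℤ, (∀ i, i ≠ i0 → i ≠ iq → x i = a i) →
      ∑ i : Fin (d - 1), ((i.val : ℤ) + 1) * x (Fin.castLE (Nat.sub_le d 1) i)
        = x i0 + D := by
    intro x hx
    have h1 : ∑ i ∈ Finset.univ.erase z0,
          ((i.val : ℤ) + 1) * x (Fin.castLE (Nat.sub_le d 1) i)
        + ((z0.val : ℤ) + 1) * x (Fin.castLE (Nat.sub_le d 1) z0)
        = ∑ i : Fin (d - 1), ((i.val : ℤ) + 1) * x (Fin.castLE (Nat.sub_le d 1) i) :=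
      Finset.sum_erase_add _ _ (Finset.mem_univ z0)
    have h2 : ∑ i ∈ Finset.univ.erase z0,
          ((i.val : ℤ) + 1) * x (Fin.castLE (Nat.sub_le d 1) i) = D := by
      rw [hD]
      refine Finset.sum_congr rfl fun i hi => ?_
      have hiz : i ≠ z0 := (Finset.mem_erase.1 hi).1
      have hni0 : Fin.castLE (Nat.sub_le d 1) i ≠ i0 := by
        intro hcon
        apply hiz
        rw [hi0] at hcon
        have hv : (i : ℕ) = 0 := by simpa using congrArg Fin.val hcon
        rw [hz0]
        exact Fin.ext (by simpa using hv)
      have hniq : Fin.castLE (Nat.sub_le d 1) i ≠ iq := by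
        intro hcon
        rw [hiq] at hcon
        have hv : (i : ℕ) = d - 1 := by simpa using congrArg Fin.val hcon
        have := i.isLt
        omega
      rw [hx _ hni0 hniq]
    have h3 : ((z0.val : ℤ) + 1) * x (Fin.castLE (Nat.sub_le d 1) z0) = x i0 := by
      rw [hcast0]; simp [hz0]
    rw [← h1, h2, h3]; ring
  have hmem : ∀ x : Fin d → ℤ, (∀ i, i ≠ i0 → i ≠ iq → x i = a i) →
      (memKd d x ↔ (Even (x i0 + x iq + C) ∨ q ∣ (x i0 + D))) := by
    intro x hx
    simp only [memKd, memLtil]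
    rw [hsum1 x hx, hsum2 x hx]
  -- the map
  set φ : ℤ × ℤ → (Fin d → ℤ) :=
    fun p i => if i = i0 then p.1 else if i = iq then p.2 else a i with hφ
  have hφ0 : ∀ p : ℤ × ℤ, φ p i0 = p.1 := by intro p; simp [hφ]
  have hφq : ∀ p : ℤ × ℤ, φ p iq = p.2 := by intro p; simp [hφ, hne]
  have hφa : ∀ (p : ℤ × ℤ) (i : Fin d), i ≠ i0 → i ≠ iq → φ p i = a i := by
    intro p i h1 h2; simp [hφ, h1, h2]
  set T : Finset (ℤ × ℤ) :=
    (Finset.Ico (a i0) (a i0 + q) ×ˢ ({a iq, a iq + 1} : Finset ℤ)).filter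
      (fun p => Even (p.1 + p.2 + C) ∨ q ∣ (p.1 + D)) with hT
  have hset : {x : Fin d → ℤ |
      (a ⟨0, by omega⟩ ≤ x ⟨0, by omega⟩ ∧
        x ⟨0, by omega⟩ < a ⟨0, by omega⟩ + (2 * (d : ℤ) - 1)) ∧
      (∀ i : Fin d, i ≠ ⟨0, by omega⟩ → i ≠ ⟨d - 1, by omega⟩ → x i = a i) ∧
      (x ⟨d - 1, by omega⟩ = a ⟨d - 1, by omega⟩ ∨
        x ⟨d - 1, by omega⟩ = a ⟨d - 1, by omega⟩ + 1) ∧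
      memKd d x} = ↑(T.image φ) := by
    ext x
    simp only [Set.mem_setOf_eq, Finset.coe_image, Set.mem_image, Finset.mem_coe, hT,
      Finset.mem_filter, Finset.mem_product, Finset.mem_Ico, Finset.mem_insert,
      Finset.mem_singleton]
    constructor
    · rintro ⟨⟨h1a, h1b⟩, h2, h3, h4⟩
      have h2' : ∀ i, i ≠ i0 → i ≠ iq → x i = a i := h2
      have hfx : φ (x i0, x iq) = x := by
        funext i
        by_cases hi : i = i0
        · subst hi; exact hφ0 _
        · by_cases hi2 : i = iq
          · subst hi2; exact hφq _
          · rw [hφa _ i hi hi2, h2' i hi hi2]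
      refine ⟨(x i0, x iq), ⟨⟨⟨h1a, h1b⟩, h3⟩, ?_⟩, hfx⟩
      exact (hmem x h2').1 h4
    · rintro ⟨p, ⟨⟨⟨h1a, h1b⟩, h3⟩, hP⟩, rfl⟩
      have hφx : ∀ i, i ≠ i0 → i ≠ iq → φ p i = a i := fun i h1 h2 => hφa p i h1 h2
      refine ⟨⟨?_, ?_⟩, hφx, ?_, ?_⟩
      · rw [show (⟨0, by omega⟩ : Fin d) = i0 from rfl, hφ0]; exact h1a
      · rw [show (⟨0, by omega⟩ : Fin d) = i0 from rfl, hφ0]; exact h1b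
      · rw [show (⟨d - 1, by omega⟩ : Fin d) = iq from rfl, hφq]; exact h3
      · rw [hmem _ hφx, hφ0, hφq]; exact hP
  rw [hset, Set.ncard_coe_finset]
  have hinj : Function.Injective φ := by
    intro p p' h
    have h1 := congrFun h i0
    have h2 := congrFun h iq
    rw [hφ0, hφ0] at h1
    rw [hφq, hφq] at h2
    exact Prod.ext h1 h2
  rw [Finset.card_image_of_injective _ hinj]
  -- now count T
  set u0 : ℤ := a i0 + (-(a i0 + D)) % q with hu0
  have hm0 : 0 ≤ (-(a i0 + D)) % q := Int.emod_nonneg _ (ne_of_gt hq0)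
  have hm1 : (-(a i0 + D)) % q < q := Int.emod_lt_of_pos _ hq0
  have hu0l : a i0 ≤ u0 := by omega
  have hu0r : u0 < a i0 + q := by omega
  have hu0dvd : q ∣ u0 + D := by
    refine ⟨-((-(a i0 + D)) / q), ?_⟩
    rw [hu0, Int.emod_def]; ring
  have huniq : ∀ u : ℤ, a i0 ≤ u → u < a i0 + q → q ∣ u + D → u = u0 := by
    intro u h1 h2 hdvd
    obtain ⟨k, hk⟩ := dvd_sub hdvd hu0dvd
    have hb1 : q * k < q * 1 := by rw [mul_one]; omega
    have hb2 : q * (-1) < q * k := by rw [mul_neg_one]; omega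
    have hk1 : k < 1 := lt_of_mul_lt_mul_left hb1 hq0.le
    have hk2 : -1 < k := lt_of_mul_lt_mul_left hb2 hq0.le
    have : k = 0 := by omega
    rw [this, mul_zero] at hk
    omega
  set I : Finset ℤ := Finset.Ico (a i0) (a i0 + q) with hI
  set V : Finset ℤ := ({a iq, a iq + 1} : Finset ℤ) with hV
  set f : ℤ → ℤ × ℤ :=
    fun u => (u, if Even (u + a iq + C) then a iq else a iq + 1) with hf
  have hfinj : Function.Injective f := fun u1 u2 h => congrArg Prod.fst h
  have hA : (I ×ˢ V).filter (fun p => Even (p.1 + p.2 + C)) = I.image f := by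
    ext p
    simp only [Finset.mem_filter, Finset.mem_product, Finset.mem_image, hI, hV, hf,
      Finset.mem_Ico, Finset.mem_insert, Finset.mem_singleton]
    constructor
    · rintro ⟨⟨hu, hv⟩, he⟩
      refine ⟨p.1, hu, ?_⟩
      have hsnd : (if Even (p.1 + a iq + C) then a iq else a iq + 1) = p.2 := by
        rcases hv with hv | hv
        · rw [if_pos (by rw [← hv]; exact he), hv]
        · rw [if_neg, hv]
          rw [hv] at he
          simp only [Int.even_iff] at he ⊢
          omega
      exact Prod.ext rfl hsnd
    · rintro ⟨u, hu, rfl⟩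
      refine ⟨⟨hu, ?_⟩, ?_⟩
      · split <;> simp
      · by_cases h : Even (u + a iq + C)
        · simp [h]
        · simp only [h, if_neg, ite_false]
          simp only [Int.even_iff] at h ⊢
          omega
  have hB : (I ×ˢ V).filter (fun p => q ∣ (p.1 + D))
      = ({(u0, a iq), (u0, a iq + 1)} : Finset (ℤ × ℤ)) := by
    ext p
    simp only [Finset.mem_filter, Finset.mem_product, hI, hV, Finset.mem_Ico,
      Finset.mem_insert, Finset.mem_singleton]
    constructor
    · rintro ⟨⟨hu, hv⟩, hdvd⟩
      have h1 : p.1 = u0 := huniq p.1 hu.1 hu.2 hdvd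
      rcases hv with hv | hv
      · left; exact Prod.ext h1 hv
      · right; exact Prod.ext h1 hv
    · rintro (rfl | rfl) <;>
        exact ⟨⟨⟨hu0l, hu0r⟩, by simp⟩, hu0dvd⟩
  have hABint : (I ×ˢ V).filter (fun p => Even (p.1 + p.2 + C))
      ∩ (I ×ˢ V).filter (fun p => q ∣ (p.1 + D)) = {f u0} := by
    rw [hA, hB]
    ext p
    simp only [Finset.mem_inter, Finset.mem_image, Finset.mem_insert,
      Finset.mem_singleton, hf]
    constructor
    · rintro ⟨⟨u, hu, rfl⟩, h | h⟩
      · have : u = u0 := congrArg Prod.fst h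
        subst this; rfl
      · have : u = u0 := congrArg Prod.fst h
        subst this; rfl
    · rintro rfl
      refine ⟨⟨u0, by rw [hI]; simp [Finset.mem_Ico]; omega, rfl⟩, ?_⟩
      split
      · left; rfl
      · right; rfl
  have hTsplit : T = (I ×ˢ V).filter (fun p => Even (p.1 + p.2 + C))
      ∪ (I ×ˢ V).filter (fun p => q ∣ (p.1 + D)) := by
    rw [hT, Finset.filter_or]
  have hcardA : ((I ×ˢ V).filter (fun p => Even (p.1 + p.2 + C))).card = 2 * d - 1 := by
    rw [hA, Finset.card_image_of_injective _ hfinj, hI, Int.card_Ico]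
    omega
  have hcardB : ((I ×ˢ V).filter (fun p => q ∣ (p.1 + D))).card = 2 := by
    rw [hB]
    rw [Finset.card_insert_of_notMem (by simp), Finset.card_singleton]
  have hcardI : ((I ×ˢ V).filter (fun p => Even (p.1 + p.2 + C))
      ∩ (I ×ˢ V).filter (fun p => q ∣ (p.1 + D))).card = 1 := by
    rw [hABint, Finset.card_singleton]
  have hkey := Finset.card_union_add_card_inter
    ((I ×ˢ V).filter (fun p => Even (p.1 + p.2 + C)))
    ((I ×ˢ V).filter (fun p => q ∣ (p.1 + D)))
  rw [hcardA, hcardB, hcardI] at hkey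
  rw [hTsplit]
  omega
end

section
/- Let d ≥ 1, let S ⊂ ℤ^d be finite, and let x ∈ ℤ^d ∖ S be such that (x + (ℤ_{≥0})^d) ∩ S = ∅ (the entire nonnegative orthant translated to x is disjoint from S). Define shell(T) = {y ∈ T : there exists z ∈ ℤ^d ∖ T with maxᵢ|yᵢ − zᵢ| ≤ 1} for any T ⊆ ℤ^d. Then |shell(S ∪ {x})| ≥ |shell(S)|; more precisely, x ∈ shell(S ∪ {x}) and the only cell of shell(S) that can fail to lie in shell(S ∪ {x}) is (x₁−1, …, x_d−1). -/
/-- The shell of a set of cells `T ⊆ ℤ^d`: the cells of `T` that touch the complement,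
possibly only at a corner. -/
def shell (d : ℕ) (T : Set (Fin d → ℤ)) : Set (Fin d → ℤ) :=
  {y ∈ T | ∃ z, z ∉ T ∧ ∀ i, |y i - z i| ≤ 1}

/-!
If `y ∈ shell S` leaves the shell when `x` is added, then `x` is the only cell outside `S`
within distance one of `y`. The componentwise maximum of `x` and `y` lies in the orthant above
`x`, hence outside `S`, and is still within distance one of `y`; so it equals `x`, i.e. `y ≤ x`.
If moreover `y i = x i` for some `i`, then `x + eᵢ` is a second such cell. Hence `y = x - 1`,
while `x` itself joins the shell through its neighbour `x + 1`.
-/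

theorem Set.ncard_le_ncard_of_subset_insert_sdiff {α : Type*} {A B : Set α} {w x : α}
    (hB : B.Finite) (hx : x ∈ B) (hA : A ⊆ insert w (B \ {x})) : A.ncard ≤ B.ncard :=
  calc A.ncard ≤ (insert w (B \ {x})).ncard := Set.ncard_le_ncard hA (hB.sdiff.insert w)
    _ ≤ (B \ {x}).ncard + 1 := Set.ncard_insert_le _ _
    _ = B.ncard := Set.ncard_sdiff_singleton_add_one hx hB

section Orthant

variable {d : ℕ} {S : Set (Fin d → ℤ)} {x : Fin d → ℤ}

theorem shell_subset (T : Set (Fin d → ℤ)) : shell d T ⊆ T :=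
  Set.sep_subset _ _

theorem mem_shell_union_singleton (hd : 1 ≤ d)
    (horth : ∀ y : Fin d → ℤ, (∀ i, x i ≤ y i) → y ∉ S) : x ∈ shell d (S ∪ {x}) := by
  refine ⟨Or.inr rfl, fun i => x i + 1, ?_, fun i => by simp⟩
  rintro (h | h)
  · exact horth _ (fun i => by omega) h
  · simpa using congrFun h ⟨0, hd⟩

theorem eq_of_mem_shell_of_notMem_shell_union
    (horth : ∀ y : Fin d → ℤ, (∀ i, x i ≤ y i) → y ∉ S) {y : Fin d → ℤ}
    (hy : y ∈ shell d S) (hy' : y ∉ shell d (S ∪ {x})) : y = fun i => x i - 1 := by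
  obtain ⟨hyS, z, hzS, hyz⟩ := hy
  have only_x : ∀ z', z' ∉ S → (∀ i, |y i - z' i| ≤ 1) → z' = x := fun z' hz' hyz' => by
    by_contra hne
    exact hy' ⟨Or.inl hyS, z', fun h => h.elim hz' hne, hyz'⟩
  obtain rfl := only_x z hzS hyz
  have hle : ∀ i, y i ≤ z i := by
    have hmax : (fun i => max (z i) (y i)) = z := by
      refine only_x _ (horth _ fun i => le_max_left _ _) fun i => ?_
      rcases le_total (z i) (y i) with h | h
      · simp [max_eq_right h]
      · simpa [max_eq_left h] using hyz i
    exact fun i => max_eq_left_iff.mp (congrFun hmax i)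
  funext i
  by_contra hne
  have hyi : y i = z i := by
    have := abs_le.mp (hyz i)
    have := hle i
    omega
  have hbump : Function.update z i (z i + 1) = z := by
    refine only_x _ (horth _ fun j => ?_) fun j => ?_
    · rcases eq_or_ne j i with rfl | hj
      · simp
      · simp [Function.update_of_ne hj]
    · rcases eq_or_ne j i with rfl | hj
      · simp [hyi]
      · simpa [Function.update_of_ne hj] using hyz j
  simpa using congrFun hbump i

end Orthant

theorem shell_mono_add_cell_general (d : ℕ) (hd : 1 ≤ d) (S : Set (Fin d → ℤ)) (hS : S.Finite)
    (x : Fin d → ℤ)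
    (horth : ∀ y : Fin d → ℤ, (∀ i, x i ≤ y i) → y ∉ S) :
    x ∈ shell d (S ∪ {x}) ∧
    (∀ y ∈ shell d S, y ∉ shell d (S ∪ {x}) → y = fun i => x i - 1) ∧
    (shell d S).ncard ≤ (shell d (S ∪ {x})).ncard := by
  have hx_mem := mem_shell_union_singleton hd horth
  have hleave : ∀ y ∈ shell d S, y ∉ shell d (S ∪ {x}) → y = fun i => x i - 1 :=
    fun y => eq_of_mem_shell_of_notMem_shell_union horth
  refine ⟨hx_mem, hleave, ?_⟩
  refine Set.ncard_le_ncard_of_subset_insert_sdiff (w := fun i => x i - 1)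
    ((hS.union (Set.finite_singleton x)).subset (shell_subset _)) hx_mem fun y hy => ?_
  by_cases hy' : y ∈ shell d (S ∪ {x})
  · have hyx : y ≠ x := fun h => horth x (fun _ => le_rfl) (h ▸ shell_subset S hy)
    exact Or.inr ⟨hy', hyx⟩
  · exact Or.inl (hleave y hy hy')

/-- Adding to a finite set `S ⊆ ℤ^d` a cell `x` whose translated nonnegative orthant is
disjoint from `S` does not decrease the shell: `x` joins the shell, and the only cell
that can leave it is `(x₁−1, …, x_d−1)`. -/
theorem shell_mono_add_cell (d : ℕ) (hd : 1 ≤ d) (S : Set (Fin d → ℤ)) (hS : S.Finite)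
    (x : Fin d → ℤ) (hx : x ∉ S)
    (horth : ∀ y : Fin d → ℤ, (∀ i, x i ≤ y i) → y ∉ S) :
    x ∈ shell d (S ∪ {x}) ∧
    (∀ y ∈ shell d S, y ∉ shell d (S ∪ {x}) → y = fun i => x i - 1) ∧
    (shell d S).ncard ≤ (shell d (S ∪ {x})).ncard :=
  shell_mono_add_cell_general d hd S hS x horth
end

section
/- Let d ≥ 2 and q = 2d−1. Define vectors in ℤ^{d−1} (with standard basis e₁,…,e_{d−1}): u₁ = q·e₁; uᵢ = eᵢ − i·e₁ for odd i with 2 ≤ i ≤ d−1; uᵢ = eᵢ + (q−i)·e₁ for even i with 2 ≤ i ≤ d−1. Then the subgroup of ℤ^{d−1} generated by u₁, …, u_{d−1} equals L̃_{d−1} = {a ∈ ℤ^{d−1} : Σ_{i=1}^{d−1} i·aᵢ ≡ 0 (mod 2d−1)}. -/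
/-- The generating vectors `u₁, …, u_{d−1}` of `ℤ^{d−1}` (0-indexed: `u` at index `j`
is the vector `u_{j+1}` of the paper): `u₁ = q·e₁`; for `2 ≤ i ≤ d−1`,
`uᵢ = eᵢ − i·e₁` if `i` is odd and `uᵢ = eᵢ + (q−i)·e₁` if `i` is even, where
`q = 2d−1`. -/
def uvec (d : ℕ) (j : Fin (d - 1)) : Fin (d - 1) → ℤ :=
  if j.val = 0 then (2 * (d : ℤ) - 1) • Pi.single j 1
  else if Odd (j.val + 1) then
    Pi.single j 1 - ((j.val : ℤ) + 1) • Pi.single (⟨0, j.pos⟩ : Fin (d - 1)) 1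
  else
    Pi.single j 1 + (2 * (d : ℤ) - 1 - ((j.val : ℤ) + 1)) • Pi.single (⟨0, j.pos⟩ : Fin (d - 1)) 1

/-!
Writing `w i = i + 1`, the lattice `L̃` is `{a | q ∣ w ⬝ᵥ a}`. Since `w₁ = 1`, such a lattice is
generated by `q • e₁` together with the vectors `eⱼ - wⱼ • e₁`: indeed
`a = ∑ⱼ aⱼ • (eⱼ - wⱼ • e₁) + (w ⬝ᵥ a) • e₁`. Each `uⱼ` differs from `eⱼ - wⱼ • e₁` by a multiple
of `u₁ = q • e₁`, so the `uⱼ` generate the same lattice.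
-/

open Matrix Set

section DvdDotProduct

variable {ι : Type*} [Fintype ι]

def dvdDotProductSubgroup (w : ι → ℤ) (q : ℤ) : AddSubgroup (ι → ℤ) :=
  (AddSubgroup.zmultiples q).comap (dotProductBilin ℤ ℤ w).toAddMonoidHom

theorem mem_dvdDotProductSubgroup {w : ι → ℤ} {q : ℤ} {a : ι → ℤ} :
    a ∈ dvdDotProductSubgroup w q ↔ q ∣ w ⬝ᵥ a :=
  Int.mem_zmultiples_iff

variable [DecidableEq ι]

theorem sum_smul_single_sub_smul_single (w a : ι → ℤ) (p : ι) :
    ∑ j, a j • (Pi.single j 1 - w j • Pi.single p 1) = a - (w ⬝ᵥ a) • Pi.single p 1 := by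
  simp only [smul_sub, smul_smul, Finset.sum_sub_distrib, ← Finset.sum_smul]
  congr 1
  · simp_rw [← Pi.single_smul, smul_eq_mul, mul_one, Finset.univ_sum_single]
  · simp_rw [dotProduct, mul_comm]

theorem closure_eq_dvdDotProductSubgroup {w : ι → ℤ} {p : ι} (hp : w p = 1) (q : ℤ) :
    AddSubgroup.closure
        (insert (q • Pi.single p 1) (range fun j => Pi.single j 1 - w j • Pi.single p 1)) =
      dvdDotProductSubgroup w q := by
  apply le_antisymm
  · rw [AddSubgroup.closure_le]
    rintro _ (rfl | ⟨j, rfl⟩) <;>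
      simp only [SetLike.mem_coe, mem_dvdDotProductSubgroup, dotProduct_sub, dotProduct_smul,
        dotProduct_single, hp, smul_eq_mul, mul_one, sub_self, dvd_refl, dvd_zero]
  · intro a ha
    obtain ⟨k, hk⟩ := mem_dvdDotProductSubgroup.1 ha
    have hdecomp : a = ∑ j, a j • (Pi.single j 1 - w j • Pi.single p 1) +
        k • q • Pi.single p 1 := by
      rw [sum_smul_single_sub_smul_single, hk, smul_smul, mul_comm, sub_add_cancel]
    rw [hdecomp]
    exact add_mem
      (sum_mem fun j _ =>
        zsmul_mem (AddSubgroup.subset_closure (mem_insert_of_mem _ (mem_range_self j))) _)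
      (zsmul_mem (AddSubgroup.subset_closure (mem_insert _ _)) _)

end DvdDotProduct

theorem uvec_zero (d : ℕ) (h : 0 < d - 1) :
    uvec d ⟨0, h⟩ = (2 * (d : ℤ) - 1) • Pi.single ⟨0, h⟩ 1 :=
  if_pos rfl

theorem exists_uvec_eq_add_zsmul (d : ℕ) (j : Fin (d - 1)) :
    ∃ c : ℤ, uvec d j = (Pi.single j 1 - ((j.val : ℤ) + 1) • Pi.single ⟨0, j.pos⟩ 1) +
      c • (2 * (d : ℤ) - 1) • Pi.single ⟨0, j.pos⟩ 1 := by
  unfold uvec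
  split_ifs with hj hodd
  · have hj0 : j = ⟨0, j.pos⟩ := Fin.ext hj
    exact ⟨1, by rw [hj, ← hj0]; simp⟩
  · exact ⟨0, by simp⟩
  · exact ⟨1, by rw [one_smul, sub_smul]; abel⟩

/-- The subgroup of `ℤ^{d−1}` generated by `u₁, …, u_{d−1}` is exactly the lifted code
`L̃_{d−1} = {a ∈ ℤ^{d−1} : Σᵢ i·aᵢ ≡ 0 (mod 2d−1)}`. -/
theorem closure_uvec_eq_Ltil (d : ℕ) (hd : 2 ≤ d) :
    (AddSubgroup.closure (Set.range (uvec d)) : Set (Fin (d - 1) → ℤ)) =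
      {a | (2 * (d : ℤ) - 1) ∣ ∑ i : Fin (d - 1), ((i.val : ℤ) + 1) * a i} := by
  have hpos : 0 < d - 1 := by omega
  suffices AddSubgroup.closure (range (uvec d)) =
      dvdDotProductSubgroup (fun i : Fin (d - 1) => (i.val : ℤ) + 1) (2 * d - 1) by
    ext a
    rw [this, SetLike.mem_coe, mem_dvdDotProductSubgroup]
    rfl
  rw [← closure_eq_dvdDotProductSubgroup (p := ⟨0, hpos⟩) (by simp)]
  have hq : (2 * (d : ℤ) - 1) • Pi.single ⟨0, hpos⟩ 1 ∈ AddSubgroup.closure (range (uvec d)) :=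
    uvec_zero d hpos ▸ AddSubgroup.subset_closure ⟨_, rfl⟩
  apply le_antisymm <;> rw [AddSubgroup.closure_le]
  · rintro _ ⟨j, rfl⟩
    obtain ⟨c, hc⟩ := exists_uvec_eq_add_zsmul d j
    rw [hc]
    exact add_mem (AddSubgroup.subset_closure (mem_insert_of_mem _ (mem_range_self j)))
      (zsmul_mem (AddSubgroup.subset_closure (mem_insert _ _)) c)
  · rintro _ (rfl | ⟨j, rfl⟩)
    · exact hq
    · obtain ⟨c, hc⟩ := exists_uvec_eq_add_zsmul d j
      dsimp only
      rw [eq_sub_of_add_eq hc.symm]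
      exact sub_mem (AddSubgroup.subset_closure ⟨j, rfl⟩) (zsmul_mem hq c)
end
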